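/- Lemma 3.18, specialized to expanding affine maps (derivative of the coding map in the parameter): Let U ⊆ ℂ be open and let a_i, b_i : U → ℂ (1 ≤ i ≤ m) be holomorphic with |a_i(λ)| > 1 for every i and λ ∈ U. For λ ∈ U set φ_{λ,i}(z) = (z − b_i(λ))/a_i(λ) and let π_λ : Σ_m → ℂ be the coding map π_λ(ω) = lim_{n→∞} φ_{λ,ω_1} ∘ ⋯ ∘ φ_{λ,ω_n}(0). Then for each ω ∈ Σ_m the map λ ↦ π_λ(ω) is holomorphic on U, and for every λ ∈ U its derivative equals d/dλ π_λ(ω) = − Σ_{n=1}^∞ (∏_{k=1}^{n} a_{ω_k}(λ))^{−1} · ( a′_{ω_n}(λ) · π_λ(σ^{n−1}ω) + b′_{ω_n}(λ) ), the series converging absolutely. -/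

import Mathlib

open MeasureTheory Filter Set Metric ENNReal

/-- `affineIter a b ω n = φ_{ω₁} ∘ ⋯ ∘ φ_{ω_n} (0)`, where `φ_i(z) = (z - b i)/(a i)`
is the inverse of the affine map `g_i(z) = a i * z + b i`. -/
noncomputable def affineIter {m : ℕ} (a b : Fin m → ℂ) (ω : ℕ → Fin m) (n : ℕ) : ℂ :=
  (List.range n).foldr (fun k z => (z - b (ω k)) / a (ω k)) 0

/-- The coding map `π(ω) = lim_{n→∞} φ_{ω₁} ∘ ⋯ ∘ φ_{ω_n}(0)`. -/
noncomputable def codingMap {m : ℕ} (a b : Fin m → ℂ) (ω : ℕ → Fin m) : ℂ :=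
  limUnder atTop (affineIter a b ω)

/-- The limit set `J = π(Σ_m)`, i.e. the Julia set of the semigroup `⟨g_1,…,g_m⟩`. -/
noncomputable def limitSet {m : ℕ} (a b : Fin m → ℂ) : Set ℂ :=
  Set.range (codingMap a b)

/-- The transversality condition (TC) for a family of expanding affine systems over `U`:
there is `C₁ > 0` such that for every `r ∈ (0, D]` and all `ω, τ` with distinct first
symbols, `Leb {λ ∈ U : |π_λ(ω) - π_λ(τ)| ≤ r} ≤ C₁ r²`. -/
def TCond {m : ℕ} {E : Type*} [MeasurableSpace E] (μ : Measure E)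
    (U : Set E) (a b : E → Fin m → ℂ) (D : ℝ) : Prop :=
  ∃ C₁ > (0:ℝ), ∀ r ∈ Set.Ioc (0:ℝ) D, ∀ ω τ : ℕ → Fin m, ω 0 ≠ τ 0 →
    μ {l ∈ U | ‖codingMap (a l) (b l) ω - codingMap (a l) (b l) τ‖ ≤ r}
      ≤ ENNReal.ofReal (C₁ * r ^ 2)

/-- The strong transversality condition (STC), with real parameter dimension `d`:
there is `C₁' > 0` such that for every `r ∈ (0, D]` and all `ω, τ` with distinct first
symbols, the set `{λ ∈ U : |π_λ(ω) - π_λ(τ)| ≤ r}` can be covered by at most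
`C₁' r^(2-d)` balls of radius `r`. -/
def STCond {m : ℕ} {E : Type*} [PseudoMetricSpace E]
    (U : Set E) (a b : E → Fin m → ℂ) (D : ℝ) (d : ℝ) : Prop :=
  ∃ C > (0:ℝ), ∀ r ∈ Set.Ioc (0:ℝ) D, ∀ ω τ : ℕ → Fin m, ω 0 ≠ τ 0 →
    ∃ S : Finset E, (S.card : ℝ) ≤ C * r ^ ((2:ℝ) - d) ∧
      {l ∈ U | ‖codingMap (a l) (b l) ω - codingMap (a l) (b l) τ‖ ≤ r}
        ⊆ ⋃ x ∈ S, Metric.closedBall x r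

/-- The analytic transversality condition (ATC) for a holomorphic family of expanding
affine systems: whenever `π_λ(ω) = π_λ(τ)` with `ω₁ ≠ τ₁`, the complex gradient of
`λ ↦ π_λ(ω) - π_λ(τ)` at `λ` is nonzero. -/
def ATCond {m : ℕ} {E : Type*} [NormedAddCommGroup E] [NormedSpace ℂ E]
    (U : Set E) (a b : E → Fin m → ℂ) : Prop :=
  ∀ ω τ : ℕ → Fin m, ω 0 ≠ τ 0 → ∀ l ∈ U,
    codingMap (a l) (b l) ω = codingMap (a l) (b l) τ →
    fderiv ℂ (fun μ => codingMap (a μ) (b μ) ω - codingMap (a μ) (b μ) τ) l ≠ 0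

open Topology

/-!
Expanding the composition of the inverse branches gives
`π_λ(ω) = -∑ⱼ b_{ω_j}(λ) / ∏_{k ≤ j} a_{ω_k}(λ)`, a series of holomorphic functions dominated,
near each parameter, by a geometric series independent of `ω`. Hence `λ ↦ π_λ(ω)` is holomorphic
and bounded near `λ` uniformly in `ω`, so by the Cauchy estimate its derivative `D(ω)` at `λ` is
bounded uniformly in `ω`. Differentiating `π_λ(σω) = a_{ω_1}(λ) π_λ(ω) + b_{ω_1}(λ)` gives
`D(σω) = a_{ω_1} D(ω) + a'_{ω_1} π(ω) + b'_{ω_1}`. Iterating this `N` times, the `N`-th partial sum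
of the series equals `(∏_{k ≤ N} a_{ω_k})⁻¹ D(σᴺω) - D(ω)`, and the first term tends to `0`
because `D` is bounded while the products grow geometrically.
-/

lemma hasSum_mul_inv_pow_succ {ρ : ℝ} (hρ : 1 < ρ) (C : ℝ) :
    HasSum (fun j : ℕ => C * ρ⁻¹ ^ (j + 1)) (C / (ρ - 1)) := by
  have hρ0 : 0 < ρ := zero_lt_one.trans hρ
  have h := (hasSum_geometric_of_lt_one (by positivity) (inv_lt_one_of_one_lt₀ hρ)).mul_left
    (C * ρ⁻¹)
  have hval : C * ρ⁻¹ * (1 - ρ⁻¹)⁻¹ = C / (ρ - 1) := by field_simp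
  simpa only [hval, pow_succ', mul_assoc] using h

lemma norm_inv_prod_le {f : ℕ → ℂ} {ρ : ℝ} (hρ : 0 < ρ) (hf : ∀ k, ρ ≤ ‖f k‖) (n : ℕ) :
    ‖(∏ k ∈ Finset.range n, f k)⁻¹‖ ≤ ρ⁻¹ ^ n := by
  rw [norm_inv, norm_prod, inv_pow]
  refine inv_anti₀ (pow_pos hρ n) ?_
  calc ρ ^ n = ∏ _k ∈ Finset.range n, ρ := by simp
    _ ≤ ∏ k ∈ Finset.range n, ‖f k‖ :=
      Finset.prod_le_prod (fun _ _ => hρ.le) fun k _ => hf k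

lemma norm_deriv_le_of_forall_mem_ball_norm_le {f : ℂ → ℂ} {c : ℂ} {R C : ℝ} (hR : 0 < R)
    (hf : DifferentiableOn ℂ f (ball c R)) (hC : ∀ z ∈ ball c R, ‖f z‖ ≤ C) :
    ‖deriv f c‖ ≤ 2 * C / R := by
  refine Complex.norm_deriv_le_div_of_mapsTo_ball hf (fun z hz => ?_) hR
  rw [mem_closedBall]
  linarith [dist_le_norm_add_norm (f z) (f c), hC z hz, hC c (mem_ball_self hR)]

section ShiftRecursion

variable {ι : Type*} {α : ι → ℂ} {F c : (ℕ → ι) → ℂ}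

lemma sum_inv_prod_mul_eq_of_shift (hα : ∀ i, α i ≠ 0)
    (hrec : ∀ ω, F (fun k => ω (k + 1)) = α (ω 0) * F ω + c ω) (ω : ℕ → ι) (N : ℕ) :
    ∑ n ∈ Finset.range N, (∏ k ∈ Finset.range (n + 1), α (ω k))⁻¹ * c (fun k => ω (k + n)) =
      (∏ k ∈ Finset.range N, α (ω k))⁻¹ * F (fun k => ω (k + N)) - F ω := by
  induction N with
  | zero => simp
  | succ N ih =>
    have h := hrec fun k => ω (k + N)
    simp only [zero_add, add_right_comm _ 1 N, add_assoc] at h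
    rw [Finset.sum_range_succ, ih, Finset.prod_range_succ, h]
    field_simp [hα (ω N)]
    ring

lemma hasSum_inv_prod_mul_of_shift {ρ K K' : ℝ} (hρ : 1 < ρ) (hα : ∀ i, ρ ≤ ‖α i‖)
    (hF : ∀ ω, ‖F ω‖ ≤ K) (hc : ∀ ω, ‖c ω‖ ≤ K')
    (hrec : ∀ ω, F (fun k => ω (k + 1)) = α (ω 0) * F ω + c ω) (ω : ℕ → ι) :
    Summable (fun n => ‖(∏ k ∈ Finset.range (n + 1), α (ω k))⁻¹ * c (fun k => ω (k + n))‖) ∧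
      HasSum (fun n => (∏ k ∈ Finset.range (n + 1), α (ω k))⁻¹ * c (fun k => ω (k + n)))
        (-F ω) := by
  have hρ0 : 0 < ρ := zero_lt_one.trans hρ
  have hαω : ∀ k, ρ ≤ ‖α (ω k)‖ := fun k => hα (ω k)
  have hsum : Summable
      (fun n => ‖(∏ k ∈ Finset.range (n + 1), α (ω k))⁻¹ * c (fun k => ω (k + n))‖) := by
    refine (hasSum_mul_inv_pow_succ hρ K').summable.of_nonneg_of_le (fun _ => norm_nonneg _)
      fun n => ?_
    rw [norm_mul, mul_comm K']
    exact mul_le_mul (norm_inv_prod_le hρ0 hαω _) (hc _) (norm_nonneg _) (by positivity)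
  refine ⟨hsum, hsum.of_norm.hasSum_iff_tendsto_nat.2 ?_⟩
  have hrem : Tendsto (fun N => (∏ k ∈ Finset.range N, α (ω k))⁻¹ * F (fun k => ω (k + N)))
      atTop (𝓝 0) := by
    have hgeom : Tendsto (fun N => ρ⁻¹ ^ N * K) atTop (𝓝 0) := by
      simpa using (tendsto_pow_atTop_nhds_zero_of_lt_one (by positivity)
        (inv_lt_one_of_one_lt₀ hρ)).mul_const K
    refine squeeze_zero_norm (fun N => ?_) hgeom
    rw [norm_mul]
    exact mul_le_mul (norm_inv_prod_le hρ0 hαω _) (hF _) (norm_nonneg _) (by positivity)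
  have hne : ∀ i, α i ≠ 0 := fun i => norm_pos_iff.1 (hρ0.trans_le (hα i))
  simp_rw [sum_inv_prod_mul_eq_of_shift hne hrec]
  simpa using hrem.sub_const (F ω)

end ShiftRecursion

noncomputable def codingTerm {m : ℕ} (a b : Fin m → ℂ) (ω : ℕ → Fin m) (j : ℕ) : ℂ :=
  -b (ω j) * (∏ k ∈ Finset.range (j + 1), a (ω k))⁻¹

section FixedSystem

variable {m : ℕ} {a b : Fin m → ℂ} {ρ M : ℝ}

lemma affineIter_succ (a b : Fin m → ℂ) (ω : ℕ → Fin m) (n : ℕ) :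
    affineIter a b ω (n + 1) = (affineIter a b (fun k => ω (k + 1)) n - b (ω 0)) / a (ω 0) := by
  simp only [affineIter, List.range_succ_eq_map, List.foldr_cons, List.foldr_map]

lemma affineIter_eq_sum_codingTerm (a b : Fin m → ℂ) (ω : ℕ → Fin m) (n : ℕ) :
    affineIter a b ω n = ∑ j ∈ Finset.range n, codingTerm a b ω j := by
  induction n generalizing ω with
  | zero => simp [affineIter]
  | succ n ih =>
    rw [affineIter_succ, ih, Finset.sum_range_succ', sub_eq_add_neg, add_div, Finset.sum_div]
    congr 1
    · refine Finset.sum_congr rfl fun j _ => ?_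
      simp only [codingTerm, Finset.prod_range_succ' (fun k => a (ω k)), mul_inv]
      ring
    · simp [codingTerm, div_eq_mul_inv]

lemma norm_codingTerm_le (hρ : 0 < ρ) (hab : ∀ i, ρ ≤ ‖a i‖ ∧ ‖b i‖ ≤ M)
    (ω : ℕ → Fin m) (j : ℕ) : ‖codingTerm a b ω j‖ ≤ M * ρ⁻¹ ^ (j + 1) := by
  rw [codingTerm, norm_mul, norm_neg]
  exact mul_le_mul (hab _).2 (norm_inv_prod_le hρ (fun k => (hab (ω k)).1) _) (norm_nonneg _)
    ((norm_nonneg _).trans (hab (ω j)).2)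

lemma hasSum_codingTerm (hρ : 1 < ρ) (hab : ∀ i, ρ ≤ ‖a i‖ ∧ ‖b i‖ ≤ M)
    (ω : ℕ → Fin m) : HasSum (codingTerm a b ω) (codingMap a b ω) := by
  have hsum : Summable (codingTerm a b ω) :=
    (hasSum_mul_inv_pow_succ hρ M).summable.of_norm_bounded
      (norm_codingTerm_le (zero_lt_one.trans hρ) hab ω)
  have hlim := hsum.hasSum.tendsto_sum_nat
  simp_rw [← affineIter_eq_sum_codingTerm] at hlim
  rw [codingMap, hlim.limUnder_eq]
  exact hsum.hasSum

lemma norm_codingMap_le (hρ : 1 < ρ) (hab : ∀ i, ρ ≤ ‖a i‖ ∧ ‖b i‖ ≤ M)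
    (ω : ℕ → Fin m) : ‖codingMap a b ω‖ ≤ M / (ρ - 1) :=
  (hasSum_codingTerm hρ hab ω).norm_le_of_bounded (hasSum_mul_inv_pow_succ hρ M)
    (norm_codingTerm_le (zero_lt_one.trans hρ) hab ω)

lemma tendsto_affineIter (hρ : 1 < ρ) (hab : ∀ i, ρ ≤ ‖a i‖ ∧ ‖b i‖ ≤ M) (ω : ℕ → Fin m) :
    Tendsto (affineIter a b ω) atTop (𝓝 (codingMap a b ω)) := by
  simpa only [← affineIter_eq_sum_codingTerm] using (hasSum_codingTerm hρ hab ω).tendsto_sum_nat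

lemma codingMap_shift (hρ : 1 < ρ) (hab : ∀ i, ρ ≤ ‖a i‖ ∧ ‖b i‖ ≤ M)
    (ω : ℕ → Fin m) :
    codingMap a b (fun k => ω (k + 1)) = a (ω 0) * codingMap a b ω + b (ω 0) := by
  have ha0 : a (ω 0) ≠ 0 := norm_pos_iff.1 ((zero_lt_one.trans hρ).trans_le (hab _).1)
  refine tendsto_nhds_unique (tendsto_affineIter hρ hab _) ?_
  have h := (((tendsto_affineIter hρ hab ω).comp (tendsto_add_atTop_nat 1)).const_mul
    (a (ω 0))).add_const (b (ω 0))
  convert h using 2 with n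
  simp only [Function.comp_apply, affineIter_succ]
  field_simp
  ring

end FixedSystem

lemma exists_eventually_bounds {m : ℕ} {X : Type*} [TopologicalSpace X] {a b : X → Fin m → ℂ}
    {l : X} (ha : ∀ i, ContinuousAt (fun μ => a μ i) l)
    (hb : ∀ i, ContinuousAt (fun μ => b μ i) l) (hexp : ∀ i, 1 < ‖a l i‖) :
    ∃ ρ > 1, ∃ M, ∀ᶠ μ in 𝓝 l, ∀ i, ρ ≤ ‖a μ i‖ ∧ ‖b μ i‖ ≤ M := by
  obtain ⟨ρ, hρa, hρ⟩ : ∃ ρ, (∀ i, ρ < ‖a l i‖) ∧ 1 < ρ :=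
    (((eventually_all.2 fun i => eventually_lt_nhds (hexp i)).filter_mono
      nhdsWithin_le_nhds).and self_mem_nhdsWithin).exists (f := 𝓝[>] (1 : ℝ))
  obtain ⟨M, hM⟩ := Finite.exists_le fun i => ‖b l i‖
  refine ⟨ρ, hρ, M + 1, eventually_all.2 fun i => ?_⟩
  filter_upwards [(ha i).norm.eventually (eventually_gt_nhds (hρa i)),
    (hb i).norm.eventually (eventually_lt_nhds ((hM i).trans_lt (lt_add_one M)))] with μ h1 h2
  exact ⟨h1.le, h2.le⟩

section Parameter

variable {m : ℕ} {a b : ℂ → Fin m → ℂ}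

lemma differentiableOn_codingMap {V : Set ℂ} (hV : IsOpen V) {ρ M : ℝ} (hρ : 1 < ρ)
    (ha : ∀ i, DifferentiableOn ℂ (fun μ => a μ i) V)
    (hb : ∀ i, DifferentiableOn ℂ (fun μ => b μ i) V)
    (hbound : ∀ μ ∈ V, ∀ i, ρ ≤ ‖a μ i‖ ∧ ‖b μ i‖ ≤ M) (ω : ℕ → Fin m) :
    DifferentiableOn ℂ (fun μ => codingMap (a μ) (b μ) ω) V := by
  have hterm : ∀ j, DifferentiableOn ℂ (fun μ => codingTerm (a μ) (b μ) ω j) V := fun j =>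
    (hb _).neg.mul <| (DifferentiableOn.fun_finsetProd fun k _ => ha _).inv fun μ hμ =>
        Finset.prod_ne_zero_iff.2 fun k _ =>
        norm_pos_iff.1 ((zero_lt_one.trans hρ).trans_le (hbound μ hμ _).1)
  refine (Complex.differentiableOn_tsum_of_summable_norm (hasSum_mul_inv_pow_succ hρ M).summable
    hterm hV fun j μ hμ => ?_).congr fun μ hμ => ?_
  · exact norm_codingTerm_le (zero_lt_one.trans hρ) (hbound μ hμ) ω j
  · exact (hasSum_codingTerm hρ (hbound μ hμ) ω).tsum_eq.symm

lemma deriv_codingMap_shift {l : ℂ} {ρ M : ℝ} (hρ : 1 < ρ)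
    (hbound : ∀ᶠ μ in 𝓝 l, ∀ i, ρ ≤ ‖a μ i‖ ∧ ‖b μ i‖ ≤ M)
    (ha : ∀ i, DifferentiableAt ℂ (fun μ => a μ i) l)
    (hb : ∀ i, DifferentiableAt ℂ (fun μ => b μ i) l) {ω : ℕ → Fin m}
    (hπ : DifferentiableAt ℂ (fun μ => codingMap (a μ) (b μ) ω) l) :
    deriv (fun μ => codingMap (a μ) (b μ) (fun k => ω (k + 1))) l =
      a l (ω 0) * deriv (fun μ => codingMap (a μ) (b μ) ω) l +
        (deriv (fun μ => a μ (ω 0)) l * codingMap (a l) (b l) ω +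
          deriv (fun μ => b μ (ω 0)) l) := by
  have hshift : (fun μ => codingMap (a μ) (b μ) (fun k => ω (k + 1))) =ᶠ[𝓝 l]
      fun μ => a μ (ω 0) * codingMap (a μ) (b μ) ω + b μ (ω 0) := by
    filter_upwards [hbound] with μ hμ
    exact codingMap_shift hρ hμ ω
  rw [hshift.deriv_eq,
    (((ha _).hasDerivAt.fun_mul hπ.hasDerivAt).fun_add (hb _).hasDerivAt).deriv]
  ring

lemma hasDerivAt_codingMap {l : ℂ} {ε ρ M : ℝ} (hε : 0 < ε) (hρ : 1 < ρ)
    (ha : ∀ i, DifferentiableOn ℂ (fun μ => a μ i) (ball l ε))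
    (hb : ∀ i, DifferentiableOn ℂ (fun μ => b μ i) (ball l ε))
    (hbound : ∀ μ ∈ ball l ε, ∀ i, ρ ≤ ‖a μ i‖ ∧ ‖b μ i‖ ≤ M) (ω : ℕ → Fin m) :
    Summable (fun n : ℕ => ‖((∏ k ∈ Finset.range (n + 1), a l (ω k))⁻¹ *
        (deriv (fun μ => a μ (ω n)) l * codingMap (a l) (b l) (fun k => ω (k + n))
          + deriv (fun μ => b μ (ω n)) l))‖) ∧
      HasDerivAt (fun μ => codingMap (a μ) (b μ) ω)
        (- ∑' n : ℕ, (∏ k ∈ Finset.range (n + 1), a l (ω k))⁻¹ *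
          (deriv (fun μ => a μ (ω n)) l * codingMap (a l) (b l) (fun k => ω (k + n))
            + deriv (fun μ => b μ (ω n)) l)) l := by
  have hl : ball l ε ∈ 𝓝 l := ball_mem_nhds l hε
  have hπ := differentiableOn_codingMap isOpen_ball hρ ha hb hbound
  have hbound_l := hbound l (mem_ball_self hε)
  have hπ_le : ∀ ω, ‖codingMap (a l) (b l) ω‖ ≤ M / (ρ - 1) := norm_codingMap_le hρ hbound_l
  obtain ⟨A, hA⟩ := Finite.exists_le fun i => ‖deriv (fun μ => a μ i) l‖
  obtain ⟨B, hB⟩ := Finite.exists_le fun i => ‖deriv (fun μ => b μ i) l‖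
  have hseries := hasSum_inv_prod_mul_of_shift hρ (fun i => (hbound_l i).1)
    (F := fun ω => deriv (fun μ => codingMap (a μ) (b μ) ω) l)
    (c := fun ω => deriv (fun μ => a μ (ω 0)) l * codingMap (a l) (b l) ω
      + deriv (fun μ => b μ (ω 0)) l) (K' := A * (M / (ρ - 1)) + B)
    (fun ω => norm_deriv_le_of_forall_mem_ball_norm_le hε (hπ ω) fun μ hμ =>
      norm_codingMap_le hρ (hbound μ hμ) ω)
    (fun ω => ?_) (fun ω => ?_) ω
  · -- the summands of `hseries` read `ω (0 + n)` where the statement has `ω n`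
    simp only [zero_add] at hseries
    obtain ⟨hsum, hhasSum⟩ := hseries
    rw [hhasSum.tsum_eq, neg_neg]
    exact ⟨hsum, ((hπ ω).differentiableAt hl).hasDerivAt⟩
  · refine (norm_add_le _ _).trans (add_le_add ?_ (hB _))
    rw [norm_mul]
    exact mul_le_mul (hA _) (hπ_le _) (norm_nonneg _) ((norm_nonneg _).trans (hA (ω 0)))
  · simpa only [zero_add] using deriv_codingMap_shift hρ
      (Filter.eventually_of_mem hl hbound) (fun i => (ha i).differentiableAt hl)
      (fun i => (hb i).differentiableAt hl) ((hπ ω).differentiableAt hl)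

end Parameter

theorem stmt11_general {m : ℕ} (U : Set ℂ) (hUo : IsOpen U)
    (a b : ℂ → Fin m → ℂ)
    (ha : ∀ i, DifferentiableOn ℂ (fun l => a l i) U)
    (hb : ∀ i, DifferentiableOn ℂ (fun l => b l i) U)
    (haexp : ∀ l ∈ U, ∀ i, 1 < ‖a l i‖) :
    ∀ ω : ℕ → Fin m,
      DifferentiableOn ℂ (fun l => codingMap (a l) (b l) ω) U ∧
      ∀ l ∈ U,
        Summable (fun n : ℕ => ‖((∏ k ∈ Finset.range (n + 1), a l (ω k))⁻¹ *
            (deriv (fun μ => a μ (ω n)) l * codingMap (a l) (b l) (fun k => ω (k + n))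
              + deriv (fun μ => b μ (ω n)) l))‖) ∧
        HasDerivAt (fun μ => codingMap (a μ) (b μ) ω)
          (- ∑' n : ℕ, (∏ k ∈ Finset.range (n + 1), a l (ω k))⁻¹ *
            (deriv (fun μ => a μ (ω n)) l * codingMap (a l) (b l) (fun k => ω (k + n))
              + deriv (fun μ => b μ (ω n)) l)) l := by
  have hlocal : ∀ l ∈ U, ∃ ε > 0, ∃ ρ > 1, ∃ M,
      (∀ i, DifferentiableOn ℂ (fun μ => a μ i) (ball l ε)) ∧
      (∀ i, DifferentiableOn ℂ (fun μ => b μ i) (ball l ε)) ∧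
      ∀ μ ∈ ball l ε, ∀ i, ρ ≤ ‖a μ i‖ ∧ ‖b μ i‖ ≤ M := by
    intro l hl
    have hU : U ∈ 𝓝 l := hUo.mem_nhds hl
    obtain ⟨ρ, hρ, M, hev⟩ := exists_eventually_bounds
      (fun i => ((ha i).differentiableAt hU).continuousAt)
      (fun i => ((hb i).differentiableAt hU).continuousAt) (haexp l hl)
    obtain ⟨ε, hε, hball⟩ := Metric.eventually_nhds_iff_ball.1 ((hUo.eventually_mem hl).and hev)
    have hsub : ball l ε ⊆ U := fun μ hμ => (hball μ hμ).1
    exact ⟨ε, hε, ρ, hρ, M, fun i => (ha i).mono hsub, fun i => (hb i).mono hsub,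
      fun μ hμ => (hball μ hμ).2⟩
  intro ω
  refine ⟨fun l hl => ?_, fun l hl => ?_⟩ <;>
    obtain ⟨ε, hε, ρ, hρ, M, ha', hb', hbound⟩ := hlocal l hl
  · exact (hasDerivAt_codingMap hε hρ ha' hb' hbound ω).2.differentiableAt.differentiableWithinAt
  · exact hasDerivAt_codingMap hε hρ ha' hb' hbound ω

/-- **Lemma 3.18** (expanding affine case): derivative of the coding map in the parameter.
For holomorphic coefficient maps `a_i, b_i : U → ℂ` on an open `U ⊆ ℂ` with `|a_i(λ)| > 1`,
the map `λ ↦ π_λ(ω)` is holomorphic on `U` and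
`d/dλ π_λ(ω) = - ∑_{n≥1} (∏_{k=1}^n a_{ω_k}(λ))⁻¹ (a'_{ω_n}(λ) π_λ(σ^{n-1}ω) + b'_{ω_n}(λ))`,
the series converging absolutely. (Indices below are 0-based: `ω 0 = ω_1`.) -/
theorem stmt11 {m : ℕ} (hm : 2 ≤ m) (U : Set ℂ) (hUo : IsOpen U)
    (a b : ℂ → Fin m → ℂ)
    (ha : ∀ i, DifferentiableOn ℂ (fun l => a l i) U)
    (hb : ∀ i, DifferentiableOn ℂ (fun l => b l i) U)
    (haexp : ∀ l ∈ U, ∀ i, 1 < ‖a l i‖) :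
    ∀ ω : ℕ → Fin m,
      DifferentiableOn ℂ (fun l => codingMap (a l) (b l) ω) U ∧
      ∀ l ∈ U,
        Summable (fun n : ℕ => ‖((∏ k ∈ Finset.range (n + 1), a l (ω k))⁻¹ *
            (deriv (fun μ => a μ (ω n)) l * codingMap (a l) (b l) (fun k => ω (k + n))
              + deriv (fun μ => b μ (ω n)) l))‖) ∧
        HasDerivAt (fun μ => codingMap (a μ) (b μ) ω)
          (- ∑' n : ℕ, (∏ k ∈ Finset.range (n + 1), a l (ω k))⁻¹ *
            (deriv (fun μ => a μ (ω n)) l * codingMap (a l) (b l) (fun k => ω (k + n))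
              + deriv (fun μ => b μ (ω n)) l)) l :=
  stmt11_general U hUo a b ha hb haexp
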